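/- Let λ ≥ -1/2 be a real number and Δ ≥ 3. Let U be a unicyclic graph with n vertices and maximum degree Δ that has a vertex a of degree Δ lying on its cycle. If U contains another vertex b ≠ a with deg_U(b) ≥ 3, then there exists a unicyclic graph U' with n vertices and maximum degree Δ such that GRM_λ(U') < GRM_λ(U). -/

import Mathlib

open SimpleGraph

/-- Degree of a vertex (classical decidability). -/
noncomputable def deg {V : Type*} [Fintype V] (G : SimpleGraph V) (v : V) : ℕ :=
  letI := Classical.decEq V
  letI : DecidableRel G.Adj := Classical.decRel _
  G.degree v

/-- Maximum degree of a graph (classical decidability). -/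
noncomputable def maxDeg {V : Type*} [Fintype V] (G : SimpleGraph V) : ℕ :=
  letI := Classical.decEq V
  letI : DecidableRel G.Adj := Classical.decRel _
  G.maxDegree

/-- The general reduced second Zagreb index
`GRM_λ(G) = Σ_{ab ∈ E(G)} (deg a + λ)(deg b + λ)`. -/
noncomputable def GRM {V : Type*} [Fintype V] (l : ℝ) (G : SimpleGraph V) : ℝ :=
  letI := Classical.decEq V
  letI : DecidableRel G.Adj := Classical.decRel _
  ∑ e ∈ G.edgeFinset,
    Sym2.lift ⟨fun a b => ((G.degree a : ℝ) + l) * ((G.degree b : ℝ) + l),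
      fun a b => by ring⟩ e

/-- A unicyclic graph: connected with exactly as many edges as vertices. -/
def IsUnicyclic {V : Type*} [Fintype V] (G : SimpleGraph V) : Prop :=
  G.Connected ∧ G.edgeSet.ncard = Fintype.card V

/-- A vertex lies on a cycle of `G`. -/
def OnCycle {V : Type*} (G : SimpleGraph V) (v : V) : Prop :=
  ∃ (u : V) (w : G.Walk u u), w.IsCycle ∧ v ∈ w.support

/-!
Relocate an edge: for a pendant vertex `z` with neighbour `y`, let `U' = U - pq + zq`. Adding a
missing edge `uv` to a graph raises the index by exactly `(d u + 1 + λ)(d v + 1 + λ) + S u + S v`,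
where `S x = ∑_{w ∼ x} (d w + λ)`. Comparing `U = G + pq` with `U' = G + zq` for `G = U - pq`, and
using `S x ≥ d x (1 + λ)`, gives `GRM_λ(U') < GRM_λ(U)` whenever `λ ≥ -1/2`, `d p ≥ 3`, `d q ≥ 2`
and `y = p` or `d y < d p`. If moreover `p ≠ a` and `p` still reaches `z` in `U - pq`, then `U'`
is unicyclic with maximum degree `Δ`.

Such a relocation exists. If a vertex `p ≠ a` of degree `≥ 3` carries a pendant vertex `z`, take
for `q` the next vertex on a path from `p` to `a`. Otherwise every pendant vertex hangs at `a` or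
at a vertex of degree `≤ 2`. Since `|E| = |V|` there are at least `d a + d b - 4 ≥ d a - 1`
pendant vertices, but at most `d a - 2` of them hang at `a`, whose two cycle neighbours are not
pendant. So some pendant `z` hangs at a `y` with `d y ≤ 2`; take `p = b` and for `q` any neighbour
of `b` other than `y` and the first step of a path from `b` to `z`.
-/

open Finset

section

variable {V : Type*}

namespace SimpleGraph

variable {G : SimpleGraph V} {p q u v x : V}

lemma neighborSet_sup_edge_left (huv : u ≠ v) :
    (G ⊔ edge u v).neighborSet u = insert v (G.neighborSet u) := by
  ext y
  simp only [mem_neighborSet, sup_adj, edge_adj, Set.mem_insert_iff]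
  grind

lemma neighborSet_sup_edge_of_ne (hxu : x ≠ u) (hxv : x ≠ v) :
    (G ⊔ edge u v).neighborSet x = G.neighborSet x := by
  ext y
  simp only [mem_neighborSet, sup_adj, edge_adj]
  grind

lemma sdiff_edge_sup_edge (h : G.Adj p q) : G \ edge p q ⊔ edge p q = G :=
  sdiff_sup_cancel (by rw [edge_le_iff]; exact Or.inr h)

lemma not_adj_sdiff_edge (G : SimpleGraph V) (p q : V) : ¬(G \ edge p q).Adj p q := fun h =>
  ((sdiff_adj _ _ _ _).mp h).2 ((edge_adj _ _ _ _).mpr ⟨Or.inl ⟨rfl, rfl⟩, h.ne⟩)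

lemma neighborSet_sdiff_edge_of_ne (hxp : x ≠ p) (hxq : x ≠ q) :
    (G \ edge p q).neighborSet x = G.neighborSet x := by
  ext y
  simp only [mem_neighborSet, sdiff_adj, edge_adj]
  grind

lemma Connected.of_forall_adj_reachable {H : SimpleGraph V} (hG : G.Connected)
    (h : ∀ x y, G.Adj x y → H.Reachable x y) : H.Connected := by
  refine (connected_iff H).mpr ⟨fun u v => ?_, hG.nonempty⟩
  obtain ⟨w⟩ := hG u v
  induction w with
  | nil => rfl
  | cons hxy _ ih => exact (h _ _ hxy).trans ih

lemma Reachable.exists_adj_forall_reachable_sdiff_edge {b z : V} (h : G.Reachable b z)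
    (hbz : b ≠ z) : ∃ x, G.Adj b x ∧ ∀ q, q ≠ x → (G \ edge b q).Reachable b z := by
  obtain ⟨P, hP⟩ := h.exists_isPath
  cases P with
  | nil => exact absurd rfl hbz
  | @cons _ x _ hbx P' =>
    refine ⟨x, hbx, fun q hqx => ?_⟩
    have hb : b ∉ P'.support := ((Walk.cons_isPath_iff _ _).mp hP).2
    have he : s(b, q) ∉ (Walk.cons hbx P').edges := by
      rw [Walk.edges_cons, List.mem_cons, not_or]
      refine ⟨fun he => ?_, fun he => hb (P'.fst_mem_support_of_mem_edges he)⟩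
      rcases Sym2.eq_iff.mp he with ⟨-, h⟩ | ⟨rfl, -⟩
      · exact hqx h
      · exact hbx.ne rfl
    exact ((Walk.cons hbx P').toDeleteEdge _ he).reachable

theorem sum_edgeFinset_lift_add_swap [Fintype V] {M : Type*} [AddCommMonoid M]
    (G : SimpleGraph V) [DecidableRel G.Adj] (ψ : V → V → M) :
    ∑ e ∈ G.edgeFinset, Sym2.lift ⟨fun x y => ψ x y + ψ y x, fun _ _ => add_comm _ _⟩ e =
      ∑ x, ∑ y ∈ G.neighborFinset x, ψ x y := by
  classical
  calc _ = ∑ d : G.Dart, ψ d.fst d.snd := by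
        rw [← sum_fiberwise_of_maps_to (g := Dart.edge) (t := G.edgeFinset)
          (fun d _ => G.mem_edgeFinset.mpr d.edge_mem)]
        refine sum_congr rfl fun e he => ?_
        induction e with
        | _ x y =>
          let d : G.Dart := ⟨(x, y), G.mem_edgeFinset.mp he⟩
          rw [show s(x, y) = d.edge from rfl, d.edge_fiber, sum_pair d.symm_ne.symm]
          rfl
    _ = _ := by
        rw [← sum_fiberwise_of_maps_to (g := fun d : G.Dart => d.fst) (t := univ)
          (fun _ _ => mem_univ _)]
        refine sum_congr rfl fun x _ => ?_
        rw [G.dart_fst_fiber x, sum_image (fun _ _ _ _ h => G.dartOfNeighborSet_injective x h)]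
        exact (sum_subtype _ (fun y => G.mem_neighborFinset x y) (ψ x)).symm

end SimpleGraph

variable [Fintype V]

lemma deg_eq_degree (G : SimpleGraph V) (v : V) [Fintype (G.neighborSet v)] :
    deg G v = G.degree v := by
  unfold deg
  congr!

lemma deg_eq_ncard (G : SimpleGraph V) (v : V) : deg G v = (G.neighborSet v).ncard := by
  classical
  rw [deg_eq_degree, ← card_neighborSet_eq_degree, Set.fintypeCard_eq_ncard]

lemma maxDeg_eq_maxDegree (G : SimpleGraph V) [DecidableRel G.Adj] :
    maxDeg G = G.maxDegree := by
  unfold maxDeg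
  congr!

lemma deg_le_maxDeg (G : SimpleGraph V) (v : V) : deg G v ≤ maxDeg G := by
  classical
  rw [deg_eq_degree, maxDeg_eq_maxDegree]
  exact G.degree_le_maxDegree v

lemma maxDeg_eq_of_forall_deg_le {G : SimpleGraph V} {a : V} {Δ : ℕ} (ha : deg G a = Δ)
    (h : ∀ v, deg G v ≤ Δ) : maxDeg G = Δ := by
  classical
  refine le_antisymm ?_ (ha ▸ deg_le_maxDeg G a)
  rw [maxDeg_eq_maxDegree]
  exact G.maxDegree_le_of_forall_degree_le Δ fun v => deg_eq_degree G v ▸ h v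

lemma sum_deg_eq_two_mul_ncard_edgeSet (G : SimpleGraph V) :
    ∑ v, deg G v = 2 * G.edgeSet.ncard := by
  classical
  simp only [deg_eq_degree, sum_degrees_eq_twice_card_edges, ← coe_edgeFinset,
    Set.ncard_coe_finset]

lemma one_le_deg_of_adj {G : SimpleGraph V} {v x : V} (h : G.Adj v x) : 1 ≤ deg G v := by
  rw [deg_eq_ncard]
  exact (Set.ncard_pos (Set.toFinite _)).mpr ⟨x, h⟩

lemma two_le_deg_of_adj {G : SimpleGraph V} {v x y : V} (hx : G.Adj v x) (hy : G.Adj v y)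
    (hxy : x ≠ y) : 2 ≤ deg G v := by
  rw [deg_eq_ncard, ← Set.ncard_pair hxy]
  exact Set.ncard_le_ncard (Set.pair_subset hx hy)

lemma exists_adj_ne_ne_of_three_le_deg {G : SimpleGraph V} {b : V} (hb : 3 ≤ deg G b)
    (x y : V) : ∃ q, G.Adj b q ∧ q ≠ x ∧ q ≠ y := by
  rw [deg_eq_ncard] at hb
  obtain ⟨c₁, h₁, c₂, h₂, c₃, h₃, h₁₂, h₁₃, h₂₃⟩ := (Set.two_lt_ncard (Set.toFinite _)).mp hb
  by_contra! H
  have e₁ := (eq_or_ne c₁ x).imp_right (H c₁ h₁)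
  have e₂ := (eq_or_ne c₂ x).imp_right (H c₂ h₂)
  have e₃ := (eq_or_ne c₃ x).imp_right (H c₃ h₃)
  grind

lemma neighborSet_eq_singleton_of_deg_eq_one {G : SimpleGraph V} {z y : V} (hz : deg G z = 1)
    (hzy : G.Adj z y) : G.neighborSet z = {y} := by
  obtain ⟨w, hw⟩ := Set.ncard_eq_one.mp (deg_eq_ncard G z ▸ hz)
  rwa [show y = w from Set.mem_singleton_iff.mp (hw ▸ hzy)]

lemma deg_eq_one_of_neighborSet_eq_singleton {G : SimpleGraph V} {z y : V}
    (hz : G.neighborSet z = {y}) : deg G z = 1 := by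
  rw [deg_eq_ncard, hz, Set.ncard_singleton]

noncomputable def edgeWeight (l : ℝ) (G : SimpleGraph V) : Sym2 V → ℝ :=
  Sym2.lift ⟨fun x y => ((deg G x : ℝ) + l) * ((deg G y : ℝ) + l), fun _ _ => mul_comm _ _⟩

lemma GRM_eq_sum (l : ℝ) (G : SimpleGraph V) [Fintype G.edgeSet] :
    GRM l G = ∑ e ∈ G.edgeFinset, edgeWeight l G e := by
  classical
  unfold GRM edgeWeight
  simp only [← deg_eq_degree]
  congr!

noncomputable def neighborWeight (l : ℝ) (G : SimpleGraph V) (x : V) : ℝ :=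
  letI : DecidableRel G.Adj := Classical.decRel _
  ∑ y ∈ G.neighborFinset x, ((deg G y : ℝ) + l)

lemma neighborWeight_eq_sum (l : ℝ) (G : SimpleGraph V) (x : V) [Fintype (G.neighborSet x)] :
    neighborWeight l G x = ∑ y ∈ G.neighborFinset x, ((deg G y : ℝ) + l) := by
  unfold neighborWeight
  congr!

lemma neighborWeight_of_neighborSet_eq_singleton (l : ℝ) {G : SimpleGraph V} {z y : V}
    (hz : G.neighborSet z = {y}) : neighborWeight l G z = deg G y + l := by
  classical
  rw [neighborWeight_eq_sum, show G.neighborFinset z = {y} by ext; simp [← mem_neighborSet, hz],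
    sum_singleton]

lemma mul_le_neighborWeight (l : ℝ) (G : SimpleGraph V) (x : V) :
    deg G x * (1 + l) ≤ neighborWeight l G x := by
  classical
  rw [neighborWeight_eq_sum, deg_eq_degree, ← card_neighborFinset_eq_degree, ← nsmul_eq_mul]
  refine card_nsmul_le_sum _ _ _ fun y hy => ?_
  have : (1 : ℝ) ≤ deg G y := by
    exact_mod_cast one_le_deg_of_adj ((G.mem_neighborFinset x y).mp hy).symm
  linarith

section AddEdge

variable {G : SimpleGraph V} {u v : V}

lemma deg_sup_edge_left (huv : u ≠ v) (h : ¬G.Adj u v) :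
    deg (G ⊔ edge u v) u = deg G u + 1 := by
  rw [deg_eq_ncard, deg_eq_ncard, G.neighborSet_sup_edge_left huv,
    Set.ncard_insert_of_notMem (show v ∉ G.neighborSet u from h)]

lemma deg_sup_edge [DecidableEq V] (huv : u ≠ v) (h : ¬G.Adj u v) (x : V) :
    deg (G ⊔ edge u v) x = deg G x + (if x = u then 1 else 0) + (if x = v then 1 else 0) := by
  by_cases hxu : x = u
  · subst hxu
    simp [deg_sup_edge_left huv h, huv]
  by_cases hxv : x = v
  · subst hxv
    rw [edge_comm, deg_sup_edge_left (Ne.symm huv) (fun h' => h h'.symm)]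
    simp [hxu]
  · simp [deg_eq_ncard, G.neighborSet_sup_edge_of_ne hxu hxv, hxu, hxv]

lemma ncard_edgeSet_sup_edge (huv : u ≠ v) (h : ¬G.Adj u v) :
    (G ⊔ edge u v).edgeSet.ncard = G.edgeSet.ncard + 1 := by
  classical
  simp only [← coe_edgeFinset, Set.ncard_coe_finset, G.card_edgeFinset_sup_edge h huv]

theorem GRM_sup_edge (l : ℝ) (huv : u ≠ v) (h : ¬G.Adj u v) :
    GRM l (G ⊔ edge u v) = GRM l G + ((deg G u : ℝ) + 1 + l) * ((deg G v : ℝ) + 1 + l) +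
      neighborWeight l G u + neighborWeight l G v := by
  classical
  set ι : V → ℝ := fun x => (if x = u then 1 else 0) + (if x = v then 1 else 0) with hι
  have hdeg : ∀ x, (deg (G ⊔ edge u v) x : ℝ) = deg G x + ι x := fun x => by
    rw [deg_sup_edge huv h]
    push_cast
    ring
  have hedge : ∀ e ∈ G.edgeFinset, edgeWeight l (G ⊔ edge u v) e = edgeWeight l G e +
      Sym2.lift ⟨fun x y => ι x * ((deg G y : ℝ) + l) + ι y * ((deg G x : ℝ) + l),
        fun _ _ => add_comm _ _⟩ e := by
    intro e he
    induction e with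
    | _ x y =>
      have hxy : G.Adj x y := G.mem_edgeFinset.mp he
      have hιι : ι x * ι y = 0 := by
        simp only [hι]
        split_ifs <;> simp_all [G.adj_comm]
      simp only [edgeWeight, Sym2.lift_mk, hdeg]
      linear_combination hιι
  have hincident : ∑ x, ∑ y ∈ G.neighborFinset x, ι x * ((deg G y : ℝ) + l) =
      neighborWeight l G u + neighborWeight l G v := by
    simp_rw [← mul_sum, ← neighborWeight_eq_sum, hι, add_mul, ite_mul, one_mul, zero_mul,
      sum_add_distrib, sum_ite_eq', mem_univ, if_true]
  rw [GRM_eq_sum, GRM_eq_sum, G.edgeFinset_sup_edge h huv, sum_cons, sum_congr rfl hedge,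
    sum_add_distrib, G.sum_edgeFinset_lift_add_swap, hincident]
  simp only [edgeWeight, Sym2.lift_mk, hdeg, hι, if_true, if_neg huv, if_neg (Ne.symm huv)]
  ring

theorem GRM_sup_edge_lt_of_neighborSet_eq_singleton {l : ℝ} (hl : -1 / 2 ≤ l) {p q z y : V}
    (hpq : p ≠ q) (hzq : z ≠ q) (hnpq : ¬G.Adj p q) (hnzq : ¬G.Adj z q)
    (hz : G.neighborSet z = {y}) (hyp : deg G y ≤ deg G p) (hp : 2 ≤ deg G p)
    (hq : 1 ≤ deg G q) :
    GRM l (G ⊔ edge z q) < GRM l (G ⊔ edge p q) := by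
  rw [GRM_sup_edge l hzq hnzq, GRM_sup_edge l hpq hnpq,
    neighborWeight_of_neighborSet_eq_singleton l hz, deg_eq_one_of_neighborSet_eq_singleton hz,
    Nat.cast_one]
  have hW := mul_le_neighborWeight l G p
  have hyp' : (deg G y : ℝ) ≤ deg G p := by exact_mod_cast hyp
  have hp' : (2 : ℝ) ≤ deg G p := by exact_mod_cast hp
  have hq' : (1 : ℝ) ≤ deg G q := by exact_mod_cast hq
  nlinarith [mul_nonneg (by linarith : (0 : ℝ) ≤ deg G p - 1)
    (by linarith : (0 : ℝ) ≤ deg G q + 2 * l)]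

end AddEdge

section Relocation

variable {G : SimpleGraph V} {p q z : V}

lemma deg_sdiff_edge [DecidableEq V] (h : G.Adj p q) (x : V) :
    deg G x = deg (G \ edge p q) x + (if x = p then 1 else 0) + (if x = q then 1 else 0) := by
  conv_lhs => rw [← G.sdiff_edge_sup_edge h]
  exact deg_sup_edge h.ne (G.not_adj_sdiff_edge p q) x

lemma deg_sdiff_edge_sup_edge [DecidableEq V] (hpq : G.Adj p q) (hzq : z ≠ q)
    (hnzq : ¬G.Adj z q) (x : V) :
    deg (G \ edge p q ⊔ edge z q) x + (if x = p then 1 else 0) =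
      deg G x + (if x = z then 1 else 0) := by
  rw [deg_sup_edge hzq (fun h => hnzq (sdiff_le (a := G) h)), deg_sdiff_edge hpq x]
  ring

lemma isUnicyclic_sdiff_edge_sup_edge (hG : IsUnicyclic G) (hpq : G.Adj p q) (hzq : z ≠ q)
    (hnzq : ¬G.Adj z q) (hreach : (G \ edge p q).Reachable p z) :
    IsUnicyclic (G \ edge p q ⊔ edge z q) := by
  have hnzq' : ¬(G \ edge p q).Adj z q := fun h => hnzq (sdiff_le (a := G) h)
  have hpq' : (G \ edge p q ⊔ edge z q).Reachable p q :=
    (hreach.mono le_sup_left).trans (Adj.reachable (Or.inr ((edge_adj ..).mpr ⟨by simp, hzq⟩)))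
  refine ⟨hG.1.of_forall_adj_reachable fun x y hxy => ?_, ?_⟩
  · by_cases h : (G \ edge p q).Adj x y
    · exact Adj.reachable (Or.inl h : (G \ edge p q ⊔ edge z q).Adj x y)
    · simp only [sdiff_adj, hxy, true_and, not_not, edge_adj] at h
      rcases h.1 with ⟨rfl, rfl⟩ | ⟨rfl, rfl⟩
      · exact hpq'
      · exact hpq'.symm
  · rw [ncard_edgeSet_sup_edge hzq hnzq', ← hG.2, ← G.sdiff_edge_sup_edge hpq,
      ncard_edgeSet_sup_edge hpq.ne (G.not_adj_sdiff_edge p q), G.sdiff_edge_sup_edge hpq]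

theorem GRM_sdiff_edge_sup_edge_lt {l : ℝ} (hl : -1 / 2 ≤ l) {y : V} (hpq : G.Adj p q)
    (hzp : z ≠ p) (hzq : z ≠ q) (hnzq : ¬G.Adj z q) (hz : G.neighborSet z = {y})
    (hyp : y = p ∨ deg G y < deg G p) (hp : 3 ≤ deg G p) (hq : 2 ≤ deg G q) :
    GRM l (G \ edge p q ⊔ edge z q) < GRM l G := by
  classical
  have hyq : y ≠ q := by
    rintro rfl
    exact hnzq (show y ∈ G.neighborSet z from hz ▸ Set.mem_singleton y)
  have hdeg := deg_sdiff_edge hpq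
  conv_rhs => rw [← G.sdiff_edge_sup_edge hpq]
  refine GRM_sup_edge_lt_of_neighborSet_eq_singleton hl hpq.ne hzq (G.not_adj_sdiff_edge p q)
    (fun h => hnzq (sdiff_le (a := G) h)) (by rwa [G.neighborSet_sdiff_edge_of_ne hzp hzq])
    ?_ ?_ ?_
  · have hy := hdeg y
    have hp' := hdeg p
    simp only [if_true, if_neg hpq.ne, hyq, if_false] at hy hp'
    split_ifs at hy with h <;> grind
  · have := hdeg p
    simp only [if_true, if_neg hpq.ne] at this
    omega
  · have := hdeg q
    simp only [if_true, if_neg hpq.ne.symm] at this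
    omega

theorem exists_isUnicyclic_GRM_lt_of_relocation {l : ℝ} (hl : -1 / 2 ≤ l) {Δ : ℕ} {a y : V}
    (hG : IsUnicyclic G) (hmax : maxDeg G = Δ) (ha : deg G a = Δ) (hpq : G.Adj p q)
    (hpa : p ≠ a) (hp : 3 ≤ deg G p) (hq : 2 ≤ deg G q) (hz : G.neighborSet z = {y})
    (hyq : y ≠ q) (hyp : y = p ∨ deg G y < deg G p) (hreach : (G \ edge p q).Reachable p z) :
    ∃ G' : SimpleGraph V, IsUnicyclic G' ∧ maxDeg G' = Δ ∧ GRM l G' < GRM l G := by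
  classical
  have hz1 := deg_eq_one_of_neighborSet_eq_singleton hz
  have hΔ : ∀ v, deg G v ≤ Δ := hmax ▸ deg_le_maxDeg G
  have hzp : z ≠ p := by rintro rfl; omega
  have hzq : z ≠ q := by rintro rfl; omega
  have hza : z ≠ a := by rintro rfl; have := hΔ p; omega
  have hnzq : ¬G.Adj z q := fun h => hyq (Set.mem_singleton_iff.mp (hz ▸ h)).symm
  have hdeg := deg_sdiff_edge_sup_edge hpq hzq hnzq
  refine ⟨_, isUnicyclic_sdiff_edge_sup_edge hG hpq hzq hnzq hreach,
    maxDeg_eq_of_forall_deg_le (a := a) ?_ fun v => ?_,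
    GRM_sdiff_edge_sup_edge_lt hl hpq hzp hzq hnzq hz hyp hp hq⟩
  · simpa [hpa.symm, hza.symm, ha] using hdeg a
  · have hv := hdeg v
    by_cases hvz : v = z
    · subst hvz
      simp only [if_neg hzp, if_true, hz1] at hv
      have := hΔ p
      omega
    · have := hΔ v
      simp only [if_neg hvz] at hv
      split_ifs at hv <;> omega

end Relocation

lemma SimpleGraph.Walk.IsCycle.two_le_deg {G : SimpleGraph V} {u v : V} {c : G.Walk u u}
    (hc : c.IsCycle) (hv : v ∈ c.support) : 2 ≤ deg G v := by
  rw [deg_eq_ncard, ← hc.ncard_neighborSet_toSubgraph_eq_two hv]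
  exact Set.ncard_le_ncard (c.toSubgraph.neighborSet_subset v)

lemma OnCycle.exists_adj_adj {G : SimpleGraph V} {a : V} (h : OnCycle G a) :
    ∃ r r', r ≠ r' ∧ G.Adj a r ∧ G.Adj a r' ∧ 2 ≤ deg G r ∧ 2 ≤ deg G r' := by
  obtain ⟨u, c, hc, ha⟩ := h
  obtain ⟨r, r', hrr', hN⟩ := Set.ncard_eq_two.mp (hc.ncard_neighborSet_toSubgraph_eq_two ha)
  have hr : c.toSubgraph.Adj a r := show r ∈ c.toSubgraph.neighborSet a by simp [hN]
  have hr' : c.toSubgraph.Adj a r' := show r' ∈ c.toSubgraph.neighborSet a by simp [hN]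
  exact ⟨r, r', hrr', hr.adj_sub, hr'.adj_sub,
    hc.two_le_deg (c.mem_verts_toSubgraph.mp hr.snd_mem),
    hc.two_le_deg (c.mem_verts_toSubgraph.mp hr'.snd_mem)⟩

lemma SimpleGraph.Connected.exists_adj_two_le_deg {G : SimpleGraph V} (hG : G.Connected)
    {p a : V} (hpa : p ≠ a) (ha : 2 ≤ deg G a) : ∃ q, G.Adj p q ∧ 2 ≤ deg G q := by
  obtain ⟨P, hP⟩ := (hG p a).exists_isPath
  cases P with
  | nil => exact absurd rfl hpa
  | @cons _ q _ hpq P' =>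
    refine ⟨q, hpq, ?_⟩
    cases P' with
    | nil => exact ha
    | @cons _ q' _ hqq' P'' =>
      have hp : p ∉ (Walk.cons hqq' P'').support := ((Walk.cons_isPath_iff _ _).mp hP).2
      exact two_le_deg_of_adj hpq.symm hqq' (by rintro rfl; exact hp (by simp))

lemma deg_add_deg_le_card_leaves {G : SimpleGraph V} (hG : G.edgeSet.ncard = Fintype.card V)
    (hpos : ∀ v, 1 ≤ deg G v) {a b : V} (hab : a ≠ b) :
    deg G a + deg G b ≤ #{v | deg G v = 1} + 4 := by
  classical
  set t : V → ℤ := fun v => deg G v - 2 + if deg G v = 1 then 1 else 0 with ht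
  have ht_nonneg : ∀ v, 0 ≤ t v := fun v => by
    have := hpos v
    simp only [ht]
    split_ifs <;> omega
  have hsum : ∑ v, t v = #{v | deg G v = 1} := by
    have hdeg : ∑ v, (deg G v : ℤ) = 2 * Fintype.card V := by
      exact_mod_cast (sum_deg_eq_two_mul_ncard_edgeSet G).trans (by rw [hG])
    simp only [ht, sum_add_distrib, sum_sub_distrib, hdeg, sum_const, card_univ, sum_boole,
      nsmul_eq_mul]
    ring
  have hpair := sum_le_sum_of_subset_of_nonneg (subset_univ {a, b}) fun v _ _ => ht_nonneg v
  rw [sum_pair hab, hsum] at hpair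
  simp only [ht] at hpair
  split_ifs at hpair <;> omega

lemma exists_neighborSet_eq_singleton_deg_le_two {G : SimpleGraph V} (hG : IsUnicyclic G)
    {a b : V} (ha : OnCycle G a) (hba : b ≠ a) (hb : 3 ≤ deg G b)
    (hleaf : ∀ p, p ≠ a → 3 ≤ deg G p → ∀ z, G.Adj p z → deg G z ≠ 1) :
    ∃ z y, G.neighborSet z = {y} ∧ deg G y ≤ 2 := by
  classical
  by_contra! hbig
  have : Nontrivial V := ⟨b, a, hba⟩
  have hpos : ∀ v, 1 ≤ deg G v := fun v => by
    rw [deg_eq_degree]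
    exact hG.1.preconnected.degree_pos_of_nontrivial v
  obtain ⟨r, r', hrr', har, har', hr, hr'⟩ := ha.exists_adj_adj
  have hsub : ({v | deg G v = 1} : Finset V) ⊆ ((G.neighborFinset a).erase r).erase r' := by
    intro z hz
    have hz1 : deg G z = 1 := (mem_filter.mp hz).2
    obtain ⟨y, hy⟩ := Set.ncard_eq_one.mp (deg_eq_ncard G z ▸ hz1)
    have hzy : G.Adj z y := show y ∈ G.neighborSet z by simp [hy]
    obtain rfl : y = a := by
      by_contra h
      exact hleaf y h (hbig z y hy) z hzy.symm hz1
    simp only [mem_erase, mem_neighborFinset]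
    refine ⟨?_, ?_, hzy.symm⟩ <;> rintro rfl <;> omega
  have hcard := card_le_card hsub
  rw [card_erase_of_mem (by simp [har', hrr'.symm]), card_erase_of_mem (by simp [har]),
    card_neighborFinset_eq_degree, ← deg_eq_degree] at hcard
  have := deg_add_deg_le_card_leaves hG.2 hpos hba.symm
  have := two_le_deg_of_adj har har' hrr'
  omega

end

theorem stmt9_general {V : Type*} [Fintype V] (l : ℝ) (hl : -1/2 ≤ l)
    (Δ : ℕ) (hΔ3 : 3 ≤ Δ) (U : SimpleGraph V) (hU : IsUnicyclic U)
    (hmax : maxDeg U = Δ)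
    (a : V) (ha : deg U a = Δ) (hacyc : OnCycle U a)
    (b : V) (hba : b ≠ a) (hb : 3 ≤ deg U b) :
    ∃ U' : SimpleGraph V, IsUnicyclic U' ∧ maxDeg U' = Δ ∧
      GRM l U' < GRM l U := by
  by_cases hbranch : ∃ p, p ≠ a ∧ 3 ≤ deg U p ∧ ∃ z, U.Adj p z ∧ deg U z = 1
  · obtain ⟨p, hpa, hp, z, hpz, hz⟩ := hbranch
    obtain ⟨q, hpq, hq⟩ := hU.1.exists_adj_two_le_deg hpa (by omega)
    have hzq : z ≠ q := by rintro rfl; omega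
    refine exists_isUnicyclic_GRM_lt_of_relocation hl hU hmax ha hpq hpa hp hq
      (neighborSet_eq_singleton_of_deg_eq_one hz hpz.symm) hpq.ne (Or.inl rfl) (Adj.reachable ?_)
    simp [sdiff_adj, edge_adj, hpz, hzq, hpz.ne']
  · push Not at hbranch
    obtain ⟨z, y, hz, hy⟩ := exists_neighborSet_eq_singleton_deg_le_two hU hacyc hba hb hbranch
    have hbz : b ≠ z := by
      rintro rfl
      have := deg_eq_one_of_neighborSet_eq_singleton hz
      omega
    obtain ⟨x, -, hx⟩ := (hU.1 b z).exists_adj_forall_reachable_sdiff_edge hbz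
    obtain ⟨q, hbq, hqx, hqy⟩ := exists_adj_ne_ne_of_three_le_deg hb x y
    have hq : 2 ≤ deg U q := by
      have := one_le_deg_of_adj hbq.symm
      have := hbranch b hba hb q hbq
      omega
    exact exists_isUnicyclic_GRM_lt_of_relocation hl hU hmax ha hbq hba hb hq hz hqy.symm
      (Or.inr (by omega)) (hx q hqx)

theorem stmt9 {V : Type*} [Fintype V] (l : ℝ) (hl : -1/2 ≤ l)
    (n Δ : ℕ) (hΔ3 : 3 ≤ Δ) (U : SimpleGraph V) (hU : IsUnicyclic U)
    (hcard : Fintype.card V = n) (hmax : maxDeg U = Δ)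
    (a : V) (ha : deg U a = Δ) (hacyc : OnCycle U a)
    (b : V) (hba : b ≠ a) (hb : 3 ≤ deg U b) :
    ∃ U' : SimpleGraph V, IsUnicyclic U' ∧ maxDeg U' = Δ ∧
      GRM l U' < GRM l U :=
  stmt9_general l hl Δ hΔ3 U hU hmax a ha hacyc b hba hb
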